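/- For a finite MDP with absorbing sink φ, fix ρ ∈ [0,1], horizon H, an optimal safety policy μ* with associated optimal value functions V*_n, and a policy μ' used during execution. Suppose that for every time k ∈ {0, ..., H−1} and every path ω = (x(0), u(0), ..., x(k)) of positive probability under μ' with all x(t) ≠ φ, the acceptance condition ∏_{t=1}^{k} (Σ_{y≠φ} T(y | x(t-1), u(t-1))) · (1 − Σ_{y∈S} V*_{H-k-1}(y) T(y | x(k), u(k))) ≥ 1 − ρ holds, where u(k) = μ'_k(x(k)). Then the probability of reaching φ within H steps starting from any s_0 ≠ φ under μ' is at most ρ: V^{μ'}_H(s_0) ≤ ρ. -/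

import Mathlib

/-!
Let `s(z, u) = Σ_{y ≠ φ} T(y|z,u)` and `P_k(ω) = ∏_{t=1}^{k} s(x(t-1), u(t-1))`, the probability of
surviving along `ω`. As `V*_n ≥ 0` and `V*_n(φ) = 1`, the acceptance condition implies
`P_k(ω) s(x(k), u(k)) ≥ 1 - ρ`; for `ρ < 1` this forces `s(x(k), u(k)) > 0`.
Backward induction on `k` then gives `P_k(ω) (1 - V^{μ'}_{H-k}(x(k))) ≥ 1 - ρ` for every admissible `ω`:
`1 - V^{μ'}_{n+1}(z)` is the `T`-weighted sum of `1 - V^{μ'}_n(y)` over the successors `y ≠ φ`, and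
every admissible extension of `ω` by such a `y` has `P_{k+1} = P_k s(x(k), u(k))`, so the induction
hypothesis bounds each term below by `(1 - ρ) / (P_k s(x(k), u(k)))`. At `k = 0` this is
`V^{μ'}_H(s₀) ≤ ρ`.
-/

open Finset

theorem Finset.le_sum_mul_of_forall_le_sum_mul {ι R : Type*} [Field R] [LinearOrder R]
    [IsStrictOrderedRing R] {s : Finset ι} {p f : ι → R} {c : R} (hp : ∀ y ∈ s, 0 ≤ p y)
    (hσ : 0 < ∑ y ∈ s, p y) (h : ∀ y ∈ s, 0 < p y → c ≤ (∑ y ∈ s, p y) * f y) :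
    c ≤ ∑ y ∈ s, f y * p y := by
  refine le_of_mul_le_mul_left ?_ hσ
  calc (∑ y ∈ s, p y) * c = ∑ y ∈ s, c * p y := by rw [sum_mul]; simp only [mul_comm]
    _ ≤ ∑ y ∈ s, (∑ z ∈ s, p z) * f y * p y := by
      refine sum_le_sum fun y hy => ?_
      rcases (hp y hy).eq_or_lt with hpy | hpy
      · simp [← hpy]
      · exact mul_le_mul_of_nonneg_right (h y hy hpy) hpy.le
    _ = (∑ y ∈ s, p y) * ∑ y ∈ s, f y * p y := by rw [mul_sum]; simp only [mul_assoc]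

namespace FiniteMDP

variable {S U : Type}

theorem value_sink_eq_one [DecidableEq S] {φ : S} {W F : ℕ → S → ℝ}
    (h0 : ∀ x, W 0 x = if x = φ then 1 else 0)
    (hS : ∀ n x, W (n + 1) x = if x = φ then 1 else F n x) (n : ℕ) : W n φ = 1 := by
  cases n <;> simp [h0, hS]

section Paths

variable (T : S → U → S → ℝ) (φ : S)

/-- Only `x 0, …, x k` matter: the path `ω = (x(0), …, x(k))` is encoded by any `x : ℕ → S`
extending it. -/
structure IsSafePath (μ : ℕ → S → U) (s₀ : S) (k : ℕ) (x : ℕ → S) : Prop where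
  start : x 0 = s₀
  ne_sink : ∀ t, t ≤ k → x t ≠ φ
  pos : ∀ t, t < k → 0 < T (x t) (μ t (x t)) (x (t + 1))

variable {T φ} in
theorem IsSafePath.update {μ : ℕ → S → U} {s₀ : S} {k : ℕ} {x : ℕ → S}
    (hx : IsSafePath T φ μ s₀ k x) {y : S} (hy : y ≠ φ) (hxy : 0 < T (x k) (μ k (x k)) y) :
    IsSafePath T φ μ s₀ (k + 1) (Function.update x (k + 1) y) where
  start := by rw [Function.update_of_ne (by omega)]; exact hx.start
  ne_sink t ht := by
    rcases ht.lt_or_eq with ht | rfl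
    · rw [Function.update_of_ne (by omega)]; exact hx.ne_sink t (by omega)
    · simpa using hy
  pos t ht := by
    rcases (Nat.lt_succ_iff.mp ht).lt_or_eq with ht | rfl
    · rw [Function.update_of_ne (by omega), Function.update_of_ne (by omega)]; exact hx.pos t ht
    · rw [Function.update_of_ne (by omega), Function.update_self]; exact hxy

variable [Fintype S] [DecidableEq S]

def survivalProb (z : S) (u : U) : ℝ := ∑ y ∈ univ.erase φ, T z u y

def pathSurvivalProb (μ : ℕ → S → U) (x : ℕ → S) (k : ℕ) : ℝ :=
  ∏ t ∈ Icc 1 k, survivalProb T φ (x (t - 1)) (μ (t - 1) (x (t - 1)))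

variable {T φ}

theorem survivalProb_nonneg (hT0 : ∀ x u y, 0 ≤ T x u y) (z : S) (u : U) :
    0 ≤ survivalProb T φ z u :=
  sum_nonneg fun y _ => hT0 z u y

theorem pathSurvivalProb_nonneg (hT0 : ∀ x u y, 0 ≤ T x u y) (μ : ℕ → S → U) (x : ℕ → S)
    (k : ℕ) : 0 ≤ pathSurvivalProb T φ μ x k :=
  prod_nonneg fun _ _ => survivalProb_nonneg hT0 _ _

theorem pathSurvivalProb_zero (μ : ℕ → S → U) (x : ℕ → S) : pathSurvivalProb T φ μ x 0 = 1 := by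
  simp [pathSurvivalProb]

theorem pathSurvivalProb_update_succ (μ : ℕ → S → U) (x : ℕ → S) (k : ℕ) (y : S) :
    pathSurvivalProb T φ μ (Function.update x (k + 1) y) (k + 1) =
      pathSurvivalProb T φ μ x k * survivalProb T φ (x k) (μ k (x k)) := by
  rw [pathSurvivalProb, prod_Icc_succ_top (by omega), Nat.add_sub_cancel,
    Function.update_of_ne (by omega)]
  congr 1
  refine prod_congr rfl fun t ht => ?_
  rw [Function.update_of_ne (by grind)]

end Paths

variable [Fintype S] [DecidableEq S] {T : S → U → S → ℝ} {φ : S}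

theorem one_sub_sum_mul_eq_sum_erase {p W : S → ℝ} (hp : ∑ y, p y = 1) (hW : W φ = 1) :
    1 - ∑ y, W y * p y = ∑ y ∈ univ.erase φ, (1 - W y) * p y := by
  rw [sum_erase _ (by rw [hW, sub_self, zero_mul])]
  simp only [sub_mul, one_mul, sum_sub_distrib, hp]

theorem one_sub_sum_mul_le_survivalProb (hT0 : ∀ x u y, 0 ≤ T x u y)
    (hT1 : ∀ x u, ∑ y, T x u y = 1) {W : S → ℝ} (hW0 : ∀ y, 0 ≤ W y) (hWφ : W φ = 1)
    (z : S) (u : U) : 1 - ∑ y, W y * T z u y ≤ survivalProb T φ z u := by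
  rw [one_sub_sum_mul_eq_sum_erase (hT1 z u) hWφ, survivalProb]
  exact sum_le_sum fun y _ => mul_le_of_le_one_left (hT0 z u y) (by linarith [hW0 y])

theorem optimalValue_nonneg [Fintype U] [Nonempty U] (hT0 : ∀ x u y, 0 ≤ T x u y)
    {Vs : ℕ → S → ℝ} (hVs0 : ∀ x, Vs 0 x = if x = φ then 1 else 0)
    (hVsS : ∀ n x, Vs (n + 1) x =
      if x = φ then 1 else univ.inf' univ_nonempty (fun u => ∑ y, Vs n y * T x u y))
    (n : ℕ) (x : S) : 0 ≤ Vs n x := by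
  induction n generalizing x with
  | zero => rw [hVs0]; split_ifs <;> norm_num
  | succ n ih =>
    rw [hVsS]
    split_ifs
    · exact zero_le_one
    · exact le_inf' _ _ fun u _ => sum_nonneg fun y _ => mul_nonneg (ih y) (hT0 _ _ _)

section PolicyValue

variable {H : ℕ} {μ : ℕ → S → U} {V : ℕ → S → ℝ}

theorem policyValue_le_one (hT0 : ∀ x u y, 0 ≤ T x u y) (hT1 : ∀ x u, ∑ y, T x u y = 1)
    (hV0 : ∀ x, V 0 x = if x = φ then 1 else 0)
    (hVS : ∀ n x, V (n + 1) x = if x = φ then 1 else ∑ y, V n y * T x (μ (H - n - 1) x) y)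
    (n : ℕ) (x : S) : V n x ≤ 1 := by
  induction n generalizing x with
  | zero => rw [hV0]; split_ifs <;> norm_num
  | succ n ih =>
    rw [hVS]
    split_ifs
    · exact le_rfl
    · calc ∑ y, V n y * T x (μ (H - n - 1) x) y ≤ ∑ y, T x (μ (H - n - 1) x) y :=
            sum_le_sum fun y _ => mul_le_of_le_one_left (hT0 _ _ _) (ih y)
        _ = 1 := hT1 _ _

theorem le_mul_one_sub_policyValue_succ (hT0 : ∀ x u y, 0 ≤ T x u y)
    (hT1 : ∀ x u, ∑ y, T x u y = 1) (hV0 : ∀ x, V 0 x = if x = φ then 1 else 0)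
    (hVS : ∀ n x, V (n + 1) x = if x = φ then 1 else ∑ y, V n y * T x (μ (H - n - 1) x) y)
    {k n : ℕ} (hkn : k + n + 1 = H) {z : S} (hz : z ≠ φ) {c P : ℝ}
    (hs : 0 < survivalProb T φ z (μ k z))
    (h : ∀ y, y ≠ φ → 0 < T z (μ k z) y →
      c ≤ survivalProb T φ z (μ k z) * (P * (1 - V n y))) :
    c ≤ P * (1 - V (n + 1) z) := by
  rw [hVS, if_neg hz, show H - n - 1 = k by omega,
    one_sub_sum_mul_eq_sum_erase (hT1 _ _) (value_sink_eq_one hV0 hVS n), mul_sum]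
  simp only [← mul_assoc]
  exact le_sum_mul_of_forall_le_sum_mul (fun y _ => hT0 _ _ y) hs
    fun y hy hpos => h y (ne_of_mem_erase hy) hpos

theorem le_pathSurvivalProb_mul_one_sub_policyValue (hT0 : ∀ x u y, 0 ≤ T x u y)
    (hT1 : ∀ x u, ∑ y, T x u y = 1) (hV0 : ∀ x, V 0 x = if x = φ then 1 else 0)
    (hVS : ∀ n x, V (n + 1) x = if x = φ then 1 else ∑ y, V n y * T x (μ (H - n - 1) x) y)
    {ρ : ℝ} (hρ : ρ < 1) {s₀ : S}
    (hsurvive : ∀ k < H, ∀ x, IsSafePath T φ μ s₀ k x →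
      1 - ρ ≤ pathSurvivalProb T φ μ x k * survivalProb T φ (x k) (μ k (x k)))
    (n : ℕ) {k : ℕ} (hkn : k + n + 1 = H) {x : ℕ → S} (hx : IsSafePath T φ μ s₀ k x) :
    1 - ρ ≤ pathSurvivalProb T φ μ x k * (1 - V (n + 1) (x k)) := by
  have hs : ∀ k < H, ∀ x, IsSafePath T φ μ s₀ k x → 0 < survivalProb T φ (x k) (μ k (x k)) :=
    fun k hk x hx => pos_of_mul_pos_right ((sub_pos.2 hρ).trans_le (hsurvive k hk x hx))
      (pathSurvivalProb_nonneg hT0 _ _ _)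
  induction n generalizing k x with
  | zero =>
    refine le_mul_one_sub_policyValue_succ hT0 hT1 hV0 hVS (n := 0) hkn (hx.ne_sink k le_rfl)
      (hs k (by omega) x hx) fun y hy _ => ?_
    rw [hV0, if_neg hy, sub_zero, mul_one, mul_comm]
    exact hsurvive k (by omega) x hx
  | succ n ih =>
    refine le_mul_one_sub_policyValue_succ hT0 hT1 hV0 hVS hkn (hx.ne_sink k le_rfl)
      (hs k (by omega) x hx) fun y hy hpos => ?_
    have hext := ih (by omega) (hx.update hy hpos)
    rw [pathSurvivalProb_update_succ, Function.update_self] at hext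
    linarith

end PolicyValue

end FiniteMDP

open FiniteMDP in
theorem stmt10_general
    {S U : Type} [Fintype S] [DecidableEq S] [Fintype U] [Nonempty U]
    (T : S → U → S → ℝ) (φ : S)
    (hT0 : ∀ x u y, 0 ≤ T x u y)
    (hT1 : ∀ x u, ∑ y, T x u y = 1)
    (ρ : ℝ)
    (H : ℕ) (hH : 1 ≤ H)
    (Vs : ℕ → S → ℝ)
    (hVs0 : ∀ x, Vs 0 x = if x = φ then 1 else 0)
    (hVsS : ∀ n x, Vs (n + 1) x =
      if x = φ then 1
      else Finset.univ.inf' Finset.univ_nonempty (fun u => ∑ y, Vs n y * T x u y))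
    (μ' : ℕ → S → U)
    (V : ℕ → S → ℝ)
    (hV0 : ∀ x, V 0 x = if x = φ then 1 else 0)
    (hVS : ∀ n x, V (n + 1) x =
      if x = φ then 1 else ∑ y, V n y * T x (μ' (H - n - 1) x) y)
    (s0 : S) (hs0 : s0 ≠ φ)
    (hacc : ∀ k, k < H → ∀ x : ℕ → S,
      x 0 = s0 →
      (∀ t, t ≤ k → x t ≠ φ) →
      (∀ t, t < k → 0 < T (x t) (μ' t (x t)) (x (t + 1))) →
      (∏ t ∈ Finset.Icc 1 k,
          (∑ y ∈ Finset.univ.erase φ, T (x (t - 1)) (μ' (t - 1) (x (t - 1))) y)) *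
        (1 - ∑ y, Vs (H - k - 1) y * T (x k) (μ' k (x k)) y) ≥ 1 - ρ) :
    V H s0 ≤ ρ := by
  rcases le_or_gt 1 ρ with hρ | hρ
  · exact (policyValue_le_one hT0 hT1 hV0 hVS H s0).trans hρ
  have hsurvive : ∀ k < H, ∀ x, IsSafePath T φ μ' s0 k x →
      1 - ρ ≤ pathSurvivalProb T φ μ' x k * survivalProb T φ (x k) (μ' k (x k)) :=
    fun k hk x hx => (hacc k hk x hx.start hx.ne_sink hx.pos).le.trans <|
      mul_le_mul_of_nonneg_left
        (one_sub_sum_mul_le_survivalProb hT0 hT1 (optimalValue_nonneg hT0 hVs0 hVsS _)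
          (value_sink_eq_one hVs0 hVsS _) _ _)
        (pathSurvivalProb_nonneg hT0 _ _ _)
  have h := le_pathSurvivalProb_mul_one_sub_policyValue hT0 hT1 hV0 hVS hρ hsurvive (H - 1)
    (k := 0) (by omega) (x := fun _ => s0) ⟨rfl, fun _ _ => hs0, fun _ h => absurd h (by omega)⟩
  rw [pathSurvivalProb_zero, one_mul, Nat.sub_add_cancel hH] at h
  linarith

/-- Safety guarantee of the History-based Supervisor: if along every path of
positive probability under the executed policy `μ'` the acceptance condition
holds at every time instant, then the probability of reaching the sink `φ`
within `H` steps is at most `ρ`. -/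
theorem stmt10
    {S U : Type} [Fintype S] [DecidableEq S] [Fintype U] [Nonempty S] [Nonempty U]
    (T : S → U → S → ℝ) (φ : S)
    (hT0 : ∀ x u y, 0 ≤ T x u y)
    (hT1 : ∀ x u, ∑ y, T x u y = 1)
    (hsink : ∀ u, T φ u φ = 1)
    (ρ : ℝ) (hρ0 : 0 ≤ ρ) (hρ1 : ρ ≤ 1)
    (H : ℕ) (hH : 1 ≤ H)
    (Vs : ℕ → S → ℝ)
    (hVs0 : ∀ x, Vs 0 x = if x = φ then 1 else 0)
    (hVsS : ∀ n x, Vs (n + 1) x =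
      if x = φ then 1
      else Finset.univ.inf' Finset.univ_nonempty (fun u => ∑ y, Vs n y * T x u y))
    (μ' : ℕ → S → U)
    (V : ℕ → S → ℝ)
    (hV0 : ∀ x, V 0 x = if x = φ then 1 else 0)
    (hVS : ∀ n x, V (n + 1) x =
      if x = φ then 1 else ∑ y, V n y * T x (μ' (H - n - 1) x) y)
    (s0 : S) (hs0 : s0 ≠ φ)
    (hacc : ∀ k, k < H → ∀ x : ℕ → S,
      x 0 = s0 →
      (∀ t, t ≤ k → x t ≠ φ) →
      (∀ t, t < k → 0 < T (x t) (μ' t (x t)) (x (t + 1))) →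
      (∏ t ∈ Finset.Icc 1 k,
          (∑ y ∈ Finset.univ.erase φ, T (x (t - 1)) (μ' (t - 1) (x (t - 1))) y)) *
        (1 - ∑ y, Vs (H - k - 1) y * T (x k) (μ' k (x k)) y) ≥ 1 - ρ) :
    V H s0 ≤ ρ :=
  stmt10_general T φ hT0 hT1 ρ H hH Vs hVs0 hVsS μ' V hV0 hVS s0 hs0 hacc
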